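/- arXiv:2007.12606 — 3 statements merged into one kernel-verified Lean document; each statement's English description precedes it below -/
import Mathlib

section
/- For τ ∈ Ξ, i.e., τ = (T_max − (n+1)D)/n for some positive integer n ≤ n_max, one has N(τ) = n + 1 and N(τ + ε) ≤ n for every ε > 0 sufficiently small; that is, N is right-discontinuous exactly at the points of Ξ on the interval (0, T_max − 2D]. -/
/-- For a fallow duration `τ ∈ Ξ`, i.e. `τ = (Tmax - (n+1)D)/n` with
`1 ≤ n ≤ nmax = ⌊Tmax/D⌋ - 1`, the number of seasons
`N(τ) = ⌊(Tmax + τ)/(D + τ)⌋` satisfies `N(τ) = n + 1`, and `N(τ + ε) ≤ n`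
for every sufficiently small `ε > 0`: `N` is right-discontinuous at the points
of `Ξ`. -/
theorem N_right_discontinuous_on_Xi (D Tmax : ℝ) (hD : 0 < D)
    (hT : 2 * D < Tmax) (n : ℕ) (hn : 1 ≤ n) (hnmax : (n : ℤ) ≤ ⌊Tmax / D⌋ - 1)
    (τ : ℝ) (hτ : τ = (Tmax - ((n : ℝ) + 1) * D) / n) :
    ⌊(Tmax + τ) / (D + τ)⌋₊ = n + 1 ∧
    ∃ ε₀ > 0, ∀ ε : ℝ, 0 < ε → ε < ε₀ →
      ⌊(Tmax + (τ + ε)) / (D + (τ + ε))⌋₊ ≤ n := by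
  have hn1 : (1 : ℝ) ≤ n := by exact_mod_cast hn
  have hn0 : (n : ℝ) ≠ 0 := by linarith
  have hB : D + τ = (Tmax - D) / n := by rw [hτ]; field_simp; ring
  have hBpos : 0 < D + τ := by
    rw [hB]; apply div_pos (by linarith) (by linarith)
  have hA : Tmax + τ = ((n : ℝ) + 1) * (D + τ) := by
    rw [hτ]; field_simp; ring
  constructor
  · have hratio : (Tmax + τ) / (D + τ) = (n : ℝ) + 1 := by
      rw [hA, mul_div_assoc, div_self (ne_of_gt hBpos), mul_one]
    rw [hratio]
    have : ((n : ℝ) + 1) = ((n + 1 : ℕ) : ℝ) := by push_cast; ring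
    rw [this, Nat.floor_natCast]
  · refine ⟨1, one_pos, fun ε hε _ => ?_⟩
    have hBε : 0 < D + (τ + ε) := by linarith
    have hlt : (Tmax + (τ + ε)) / (D + (τ + ε)) < (n : ℝ) + 1 := by
      rw [div_lt_iff₀ hBε]
      nlinarith
    have hnonneg : 0 ≤ (Tmax + (τ + ε)) / (D + (τ + ε)) := by
      apply div_nonneg _ (le_of_lt hBε)
      nlinarith
    have := (Nat.floor_lt hnonneg).mpr (by push_cast; exact hlt :
      (Tmax + (τ + ε)) / (D + (τ + ε)) < ((n + 1 : ℕ) : ℝ))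
    omega
end

section
/- Suppose R : [0, T_max − 2D] → ℝ is such that (i) R is strictly increasing on each interval where N(τ) is constant (monotonicity), and (ii) R(τ) > R(τ') whenever N(τ) > N(τ') and τ is the largest fallow giving N(τ) seasons (each season is profitable). Then any maximizer of R on [0, T_max − 2D] belongs to the finite set Ξ of fallow durations for which the last harvest occurs exactly at T_max. -/
/-!
A fallow `τ` leaves room for `n ≥ 2` seasons exactly when `n (D + τ) ≤ Tmax + τ`, i.e. when
`τ ≤ (Tmax - n D) / (n - 1)`, the fallow whose `n`-th harvest falls exactly at `Tmax`.
Hence a fallow outside `Ξ` lies strictly below the largest fallow giving the same number of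
seasons, and by monotonicity (i) that larger fallow is strictly more profitable.
-/

/-- The number `N(τ)` of complete seasons of length `D` that fit in `[0, Tmax]` with fallow `τ`
between consecutive seasons. -/
noncomputable def numSeasons (D Tmax τ : ℝ) : ℕ := ⌊(Tmax + τ) / (D + τ)⌋₊

/-- The largest fallow giving `n` seasons: the one whose last harvest occurs exactly at `Tmax`. -/
noncomputable def maxFallow (D Tmax : ℝ) (n : ℕ) : ℝ := (Tmax - n * D) / (n - 1)

section

variable {D Tmax τ : ℝ} {n : ℕ}

theorem numSeasons_mul_le (hDτ : 0 < D + τ) (hTτ : 0 ≤ Tmax + τ) :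
    (numSeasons D Tmax τ : ℝ) * (D + τ) ≤ Tmax + τ :=
  (le_div_iff₀ hDτ).1 (Nat.floor_le (div_nonneg hTτ hDτ.le))

theorem two_le_numSeasons (hDτ : 0 < D + τ) (h : 2 * D + τ ≤ Tmax) :
    2 ≤ numSeasons D Tmax τ :=
  Nat.le_floor <| by
    rw [Nat.cast_ofNat, le_div_iff₀ hDτ]
    linarith

theorem le_maxFallow_iff (hn : 1 < n) :
    τ ≤ maxFallow D Tmax n ↔ n * (D + τ) ≤ Tmax + τ := by
  have hn' : (0 : ℝ) < n - 1 := by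
    rw [sub_pos]
    exact_mod_cast hn
  rw [maxFallow, le_div_iff₀ hn']
  constructor <;> intro h <;> linarith

theorem maxFallow_spec (hn : 1 < n) :
    Tmax = n * D + (n - 1) * maxFallow D Tmax n := by
  have hn' : (n : ℝ) - 1 ≠ 0 := by
    rw [sub_ne_zero]
    exact_mod_cast hn.ne'
  rw [maxFallow, mul_div_cancel₀ _ hn']
  ring

theorem numSeasons_maxFallow (hn : 1 < n) (hpos : 0 < D + maxFallow D Tmax n) :
    numSeasons D Tmax (maxFallow D Tmax n) = n := by
  have hquot : (Tmax + maxFallow D Tmax n) / (D + maxFallow D Tmax n) = n := by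
    rw [div_eq_iff hpos.ne']
    linarith [maxFallow_spec (D := D) (Tmax := Tmax) hn]
  rw [numSeasons, hquot, Nat.floor_natCast]

theorem maxFallow_le (hn : 2 ≤ n) (hDT : D ≤ Tmax) :
    maxFallow D Tmax n ≤ Tmax - 2 * D := by
  have hn' : (2 : ℝ) ≤ n := by exact_mod_cast hn
  rw [maxFallow, div_le_iff₀ (by linarith)]
  nlinarith

end

theorem maximizer_in_Xi_general (D Tmax : ℝ) (hD : 0 < D)
    (R : ℝ → ℝ) :
    let N : ℝ → ℕ := fun τ => ⌊(Tmax + τ) / (D + τ)⌋₊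
    let I : Set ℝ := Set.Icc 0 (Tmax - 2 * D)
    let Ξ : Set ℝ := {τ ∈ I | Tmax = (N τ : ℝ) * D + ((N τ : ℝ) - 1) * τ}
    -- (i) monotonicity: longer fallows with the same number of seasons give
    -- strictly larger profit
    (∀ τ ∈ I, ∀ τ' ∈ I, τ < τ' → N τ = N τ' → R τ < R τ') →
    -- (ii) each season is profitable: losing seasons decreases profit
    (∀ τ ∈ Ξ, ∀ τ' ∈ I, N τ' < N τ → R τ' < R τ) →
    ∀ τstar ∈ I, (∀ τ ∈ I, R τ ≤ R τstar) → τstar ∈ Ξ := by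
  intro N I Ξ hmono _ τ hτ hmax
  obtain ⟨hτ0, hτle⟩ := hτ
  have hDτ : 0 < D + τ := by linarith
  have hn : 2 ≤ numSeasons D Tmax τ := two_le_numSeasons hDτ (by linarith)
  have hτmax : τ ≤ maxFallow D Tmax (numSeasons D Tmax τ) :=
    (le_maxFallow_iff hn).2 (numSeasons_mul_le hDτ (by linarith))
  have hmaxI : maxFallow D Tmax (numSeasons D Tmax τ) ∈ I :=
    ⟨hτ0.trans hτmax, maxFallow_le hn (by linarith)⟩
  have hN : numSeasons D Tmax (maxFallow D Tmax (numSeasons D Tmax τ)) = numSeasons D Tmax τ :=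
    numSeasons_maxFallow hn (by linarith)
  have heq : τ = maxFallow D Tmax (numSeasons D Tmax τ) :=
    hτmax.eq_of_not_lt fun hlt =>
      (hmax _ hmaxI).not_gt (hmono τ ⟨hτ0, hτle⟩ _ hmaxI hlt hN.symm)
  have hspec := maxFallow_spec (D := D) (Tmax := Tmax) hn
  rw [← heq] at hspec
  exact ⟨⟨hτ0, hτle⟩, hspec⟩

/-- If the profit `R` is strictly increasing in the fallow duration among fallows
yielding the same number of seasons `N(τ)` (monotonicity), and losing a season
strictly decreases profit compared with the largest fallow giving the larger
number of seasons (each season is profitable), then any maximizer of `R` on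
`[0, Tmax - 2D]` belongs to the set `Ξ` of fallow durations for which the last
harvest occurs exactly at `Tmax`. -/
theorem maximizer_in_Xi (D Tmax : ℝ) (hD : 0 < D) (hT : 2 * D < Tmax)
    (R : ℝ → ℝ) :
    let N : ℝ → ℕ := fun τ => ⌊(Tmax + τ) / (D + τ)⌋₊
    let I : Set ℝ := Set.Icc 0 (Tmax - 2 * D)
    let Ξ : Set ℝ := {τ ∈ I | Tmax = (N τ : ℝ) * D + ((N τ : ℝ) - 1) * τ}
    -- (i) monotonicity: longer fallows with the same number of seasons give
    -- strictly larger profit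
    (∀ τ ∈ I, ∀ τ' ∈ I, τ < τ' → N τ = N τ' → R τ < R τ') →
    -- (ii) each season is profitable: losing seasons decreases profit
    (∀ τ ∈ Ξ, ∀ τ' ∈ I, N τ' < N τ → R τ' < R τ) →
    ∀ τstar ∈ I, (∀ τ ∈ I, R τ ≤ R τstar) → τstar ∈ Ξ :=
  maximizer_in_Xi_general D Tmax hD R
end

section
/- In the ODE system P' = −βPS + αa(1−γ)SX/(S+Δ) − ωP, S' = ρ(t)S(1−S/K) − aSX/(S+Δ), X' = βPS + αaγSX/(S+Δ) − μX, with all parameters nonnegative, Δ > 0, K > 0, and bounded measurable ρ(t) ∈ [0, ρ̄], the nonnegative octant { (P,S,X) : P ≥ 0, S ≥ 0, X ≥ 0 } is positively invariant, and moreover S(t) ≤ max(S(0), K) for all t ≥ 0. -/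
/-!
Each of `S`, then `(P, X)`, then `max (S 0) K - S` stays nonnegative by one barrier argument.
Where a coordinate equals `-δ` and the others are `≥ -δ`, its derivative is at least `-L δ`
(quasi-positivity plus a one-sided Lipschitz bound), with `L` coming from bounds of the continuous
solution on the compact interval `[0, T]`. Adding `ε e^{kt}` with `k > L` makes the derivative
strictly positive at the boundary, so the perturbed solution has no first exit time from the open
octant; then let `ε → 0`. For `max (S 0) K - S` one can take `L = 0`: above `K` logistic growth is
nonpositive and, once `X ≥ 0`, predation is nonnegative.
-/

open Set Filter Topology Real

theorem HasDerivAt.nonpos_of_eventually_le_nhdsLT {f : ℝ → ℝ} {f' x : ℝ}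
    (hf : HasDerivAt f f' x) (hmin : ∀ᶠ y in 𝓝[<] x, f x ≤ f y) : f' ≤ 0 := by
  have hslope : Tendsto (slope f x) (𝓝[<] x) (𝓝 f') :=
    (hasDerivAt_iff_tendsto_slope.mp hf).mono_left (nhdsWithin_mono _ fun _ hy => ne_of_lt hy)
  refine le_of_tendsto hslope ?_
  filter_upwards [hmin, self_mem_nhdsWithin] with y hy hyx
  rw [slope_def_field]
  exact div_nonpos_of_nonneg_of_nonpos (sub_nonneg.2 hy) (sub_nonpos.2 (le_of_lt hyx))

theorem pos_on_Icc_of_deriv_pos_at_boundary {ι : Type*} [Finite ι] {F F' : ι → ℝ → ℝ} {T : ℝ}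
    (hF : ∀ i t, HasDerivAt (F i) (F' i t) t) (h0 : ∀ i, 0 < F i 0)
    (hF' : ∀ i, ∀ t ∈ Ioc 0 T, F i t = 0 → (∀ j, 0 ≤ F j t) → 0 < F' i t) :
    ∀ i, ∀ t ∈ Icc 0 T, 0 < F i t := by
  by_contra! hexit
  set B : Set ℝ := Icc 0 T ∩ ⋃ i, {t | F i t ≤ 0}
  have hBne : B.Nonempty := by
    obtain ⟨i, t, ht, hFt⟩ := hexit
    exact ⟨t, ht, mem_iUnion.2 ⟨i, hFt⟩⟩
  have hBclosed : IsClosed B := isClosed_Icc.inter <| isClosed_iUnion_of_finite fun i =>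
    isClosed_le (continuous_iff_continuousAt.2 fun t => (hF i t).continuousAt) continuous_const
  have hBbdd : BddBelow B := ⟨0, fun _ ht => ht.1.1⟩
  set t₀ := sInf B
  obtain ⟨⟨ht₀0, ht₀T⟩, hexit₀⟩ : t₀ ∈ B := hBclosed.csInf_mem hBne hBbdd
  obtain ⟨i, hFi⟩ := mem_iUnion.1 hexit₀
  have hbefore : ∀ j, ∀ s ∈ Ico 0 t₀, 0 < F j s := fun j s hs => by
    by_contra! hFs
    exact (csInf_le hBbdd ⟨⟨hs.1, hs.2.le.trans ht₀T⟩, mem_iUnion.2 ⟨j, hFs⟩⟩).not_gt hs.2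
  have ht₀pos : 0 < t₀ := ht₀0.lt_of_ne fun h => (h0 i).not_ge (h ▸ hFi)
  have hleft : ∀ j, ∀ᶠ s in 𝓝[<] t₀, 0 < F j s := fun j => by
    filter_upwards [Ioo_mem_nhdsLT ht₀pos] with s hs using hbefore j s ⟨hs.1.le, hs.2⟩
  have hnonneg : ∀ j, 0 ≤ F j t₀ := fun j =>
    ge_of_tendsto ((hF j t₀).continuousAt.tendsto.mono_left nhdsWithin_le_nhds)
      ((hleft j).mono fun _ => le_of_lt)
  have hzero : F i t₀ = 0 := le_antisymm hFi (hnonneg i)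
  have hderiv_nonpos : F' i t₀ ≤ 0 :=
    (hF i t₀).nonpos_of_eventually_le_nhdsLT ((hleft i).mono fun _ hs => hzero ▸ hs.le)
  exact hderiv_nonpos.not_gt (hF' i t₀ ⟨ht₀pos, ht₀T⟩ hzero hnonneg)

theorem nonneg_on_Icc_of_deriv_ge_near_boundary {ι : Type*} [Finite ι] {f f' : ι → ℝ → ℝ}
    {T L δ₀ : ℝ} (hf : ∀ i t, HasDerivAt (f i) (f' i t) t) (h0 : ∀ i, 0 ≤ f i 0)
    (hδ₀ : 0 < δ₀)
    (hf' : ∀ i, ∀ t ∈ Ioc 0 T, ∀ δ ∈ Ioo 0 δ₀, f i t = -δ → (∀ j, -δ ≤ f j t) →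
      -(L * δ) ≤ f' i t) :
    ∀ i, ∀ t ∈ Icc 0 T, 0 ≤ f i t := by
  set k := max L 0 + 1
  have hperturbed : ∀ ε ∈ Ioo 0 (δ₀ / exp (k * T)), ∀ i, ∀ t ∈ Icc 0 T,
      0 < f i t + ε * exp (k * t) := by
    intro ε hε
    refine pos_on_Icc_of_deriv_pos_at_boundary
      (F' := fun i t => f' i t + ε * (exp (k * t) * (k * 1)))
      (fun i t => (hf i t).add (((hasDerivAt_id t).const_mul k).exp.const_mul ε))
      (fun i => by simpa using add_pos_of_nonneg_of_pos (h0 i) hε.1) ?_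
    intro i t ht hzero hall
    set δ := ε * exp (k * t)
    have hδ : δ ∈ Ioo 0 δ₀ := by
      refine ⟨by have := hε.1; positivity, ?_⟩
      calc ε * exp (k * t) ≤ ε * exp (k * T) := by gcongr; exacts [hε.1.le, ht.2]
        _ < δ₀ := (lt_div_iff₀ (exp_pos _)).1 hε.2
    have hlower := hf' i t ht δ hδ (by linarith) fun j => by linarith [hall j]
    have hL : L * δ ≤ max L 0 * δ := mul_le_mul_of_nonneg_right (le_max_left L 0) hδ.1.le
    have hgain : ε * (exp (k * t) * (k * 1)) = max L 0 * δ + δ := by ring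
    linarith [hδ.1]
  intro i t ht
  have hlim : Tendsto (fun ε => f i t + ε * exp (k * t)) (𝓝[>] 0) (𝓝 (f i t)) :=
    ((continuous_const.add (continuous_id.mul continuous_const)).tendsto' 0 _
      (by simp)).mono_left nhdsWithin_le_nhds
  refine ge_of_tendsto hlim ?_
  filter_upwards [Ioo_mem_nhdsGT (div_pos hδ₀ (exp_pos (k * T)))] with ε hε
  exact (hperturbed ε hε i t ht).le

theorem neg_mul_le_mul_mul_div_add {c s x δ Δ : ℝ} (hc : 0 ≤ c) (hs : 0 ≤ s) (hΔ : 0 < Δ)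
    (hδ : 0 ≤ δ) (hx : -δ ≤ x) : -(c * δ) ≤ c * (s * x) / (s + Δ) := by
  rw [le_div_iff₀ (by linarith)]
  nlinarith [mul_le_mul_of_nonneg_left hx (mul_nonneg hc hs), mul_nonneg (mul_nonneg hc hδ) hΔ.le]

section Season

variable {β α a γ ω μ Δ K ρbar T : ℝ} {ρ P S X : ℝ → ℝ}

theorem season_S_nonneg (ha : 0 ≤ a) (hΔ : 0 < Δ) (hK : 0 < K)
    (hρ : ∀ t, 0 ≤ ρ t ∧ ρ t ≤ ρbar)
    (hS : ∀ t, HasDerivAt S (ρ t * S t * (1 - S t / K) - a * (S t * X t) / (S t + Δ)) t)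
    (hS0 : 0 ≤ S 0) (hX : Continuous X) : ∀ t ∈ Icc 0 T, 0 ≤ S t := by
  obtain ⟨C, hC⟩ := (isCompact_Icc : IsCompact (Icc 0 T)).exists_bound_of_continuousOn
    hX.continuousOn
  refine nonneg_on_Icc_of_deriv_ge_near_boundary (ι := Unit) (f := fun _ => S)
    (L := 2 * ρbar + 2 * a * C / Δ) (δ₀ := min K (Δ / 2)) (fun _ => hS) (fun _ => hS0)
    (lt_min hK (by positivity)) ?_ ()
  rintro - t ht δ ⟨hδ, hδmin⟩ hSt -
  obtain ⟨hδK, hδΔ⟩ := lt_min_iff.1 hδmin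
  have hgrowth : ρ t * (1 + δ / K) ≤ 2 * ρbar := by
    have : δ / K ≤ 1 := (div_le_one hK).2 hδK.le
    nlinarith [hρ t, div_nonneg hδ.le hK.le]
  have hXt : -X t ≤ C := (neg_le_abs _).trans (hC t (Ioc_subset_Icc_self ht))
  have hC0 : 0 ≤ C := (abs_nonneg _).trans (hC t (Ioc_subset_Icc_self ht))
  have hpredation : -(a * X t / (Δ - δ)) ≤ 2 * a * C / Δ :=
    calc -(a * X t / (Δ - δ)) = a * -X t / (Δ - δ) := by ring
      _ ≤ a * C / (Δ - δ) := by gcongr; linarith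
      _ ≤ a * C / (Δ / 2) := by gcongr; linarith
      _ = 2 * a * C / Δ := by ring
  have hrhs : ρ t * S t * (1 - S t / K) - a * (S t * X t) / (S t + Δ)
      = -δ * (ρ t * (1 + δ / K) - a * X t / (Δ - δ)) := by
    rw [hSt, neg_add_eq_sub]; ring
  have hrate : ρ t * (1 + δ / K) - a * X t / (Δ - δ) ≤ 2 * ρbar + 2 * a * C / Δ := by linarith
  rw [hrhs]
  linarith [mul_le_mul_of_nonneg_left hrate hδ.le]

theorem season_P_X_nonneg (hβ : 0 ≤ β) (hα : 0 ≤ α) (ha : 0 ≤ a) (hγ0 : 0 ≤ γ) (hγ1 : γ ≤ 1)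
    (hω : 0 ≤ ω) (hμ : 0 ≤ μ) (hΔ : 0 < Δ)
    (hP : ∀ t, HasDerivAt P
      (-β * P t * S t + α * a * (1 - γ) * (S t * X t) / (S t + Δ) - ω * P t) t)
    (hX : ∀ t, HasDerivAt X
      (β * P t * S t + α * a * γ * (S t * X t) / (S t + Δ) - μ * X t) t)
    (hP0 : 0 ≤ P 0) (hX0 : 0 ≤ X 0) (hS : Continuous S) (hS_nonneg : ∀ t ∈ Icc 0 T, 0 ≤ S t) :
    ∀ t ∈ Icc 0 T, 0 ≤ P t ∧ 0 ≤ X t := by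
  obtain ⟨C, hC⟩ := (isCompact_Icc : IsCompact (Icc 0 T)).exists_bound_of_continuousOn
    hS.continuousOn
  have key := nonneg_on_Icc_of_deriv_ge_near_boundary (f := ![P, X])
    (f' := ![fun t => -β * P t * S t + α * a * (1 - γ) * (S t * X t) / (S t + Δ) - ω * P t,
      fun t => β * P t * S t + α * a * γ * (S t * X t) / (S t + Δ) - μ * X t])
    (T := T) (L := α * a + β * C) (δ₀ := 1) (Fin.forall_fin_two.2 ⟨hP, hX⟩)
    (Fin.forall_fin_two.2 ⟨hP0, hX0⟩) one_pos ?_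
  · exact fun t ht => ⟨key 0 t ht, key 1 t ht⟩
  intro i t ht δ hδ hzero hall
  have hSt := hS_nonneg t (Ioc_subset_Icc_self ht)
  have hSC : S t ≤ C := (le_abs_self _).trans (hC t (Ioc_subset_Icc_self ht))
  have hPt : -δ ≤ P t := hall 0
  have hXt : -δ ≤ X t := hall 1
  have hδ0 := hδ.1.le
  have hαa := mul_nonneg hα ha
  fin_cases i <;> simp only [Fin.zero_eta, Fin.mk_one, Matrix.cons_val_zero, Matrix.cons_val_one]
    at hzero ⊢
  · have hinfection :=
      neg_mul_le_mul_mul_div_add (mul_nonneg hαa (sub_nonneg.2 hγ1)) hSt hΔ hδ0 hXt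
    rw [hzero]
    nlinarith [mul_nonneg hαa (mul_nonneg hγ0 hδ0), mul_nonneg (mul_nonneg hβ hδ0) hSt,
      mul_nonneg (mul_nonneg hβ hδ0) (hSt.trans hSC), mul_nonneg hω hδ0]
  · have hinfection := neg_mul_le_mul_mul_div_add (mul_nonneg hαa hγ0) hSt hΔ hδ0 hXt
    rw [hzero] at hinfection ⊢
    nlinarith [mul_nonneg hαa (mul_nonneg (sub_nonneg.2 hγ1) hδ0),
      mul_nonneg (mul_nonneg hβ hSt) (neg_le_iff_add_nonneg.1 hPt),
      mul_nonneg (mul_nonneg hβ hδ0) (sub_nonneg.2 hSC), mul_nonneg hμ hδ0]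

theorem season_S_le (ha : 0 ≤ a) (hΔ : 0 < Δ) (hK : 0 < K) (hρ : ∀ t, 0 ≤ ρ t)
    (hS : ∀ t, HasDerivAt S (ρ t * S t * (1 - S t / K) - a * (S t * X t) / (S t + Δ)) t)
    (hX_nonneg : ∀ t ∈ Icc 0 T, 0 ≤ X t) {M : ℝ} (hKM : K ≤ M) (hS0 : S 0 ≤ M) :
    ∀ t ∈ Icc 0 T, S t ≤ M := by
  have key := nonneg_on_Icc_of_deriv_ge_near_boundary (ι := Unit) (f := fun _ t => M - S t)
    (f' := fun _ t => -(ρ t * S t * (1 - S t / K) - a * (S t * X t) / (S t + Δ)))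
    (T := T) (L := 0) (δ₀ := 1) (fun _ t => (hS t).const_sub M) (fun _ => sub_nonneg.2 hS0)
    one_pos ?_
  · exact fun t ht => sub_nonneg.1 (key () t ht)
  rintro - t ht δ ⟨hδ, -⟩ hSt -
  have hSK : K ≤ S t := by linarith
  have hS_nonneg : 0 ≤ S t := hK.le.trans hSK
  have hlogistic : ρ t * S t * (1 - S t / K) ≤ 0 :=
    mul_nonpos_of_nonneg_of_nonpos (mul_nonneg (hρ t) hS_nonneg)
      (sub_nonpos.2 ((one_le_div hK).2 hSK))
  have hpredation : 0 ≤ a * (S t * X t) / (S t + Δ) := by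
    have := hX_nonneg t (Ioc_subset_Icc_self ht)
    positivity
  linarith

end Season

theorem octant_invariant_and_S_bounded_general
    (β α a γ ω μ Δ K ρbar : ℝ)
    (hβ : 0 ≤ β) (hα : 0 ≤ α) (ha : 0 ≤ a) (hγ0 : 0 ≤ γ) (hγ1 : γ ≤ 1)
    (hω : 0 ≤ ω) (hμ : 0 ≤ μ) (hΔ : 0 < Δ) (hK : 0 < K)
    (ρ : ℝ → ℝ) (hρ : ∀ t, 0 ≤ ρ t ∧ ρ t ≤ ρbar)
    (P S X : ℝ → ℝ)
    (hP : ∀ t, HasDerivAt P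
      (-β * P t * S t + α * a * (1 - γ) * (S t * X t) / (S t + Δ) - ω * P t) t)
    (hS : ∀ t, HasDerivAt S
      (ρ t * S t * (1 - S t / K) - a * (S t * X t) / (S t + Δ)) t)
    (hX : ∀ t, HasDerivAt X
      (β * P t * S t + α * a * γ * (S t * X t) / (S t + Δ) - μ * X t) t)
    (hP0 : 0 ≤ P 0) (hS0 : 0 ≤ S 0) (hX0 : 0 ≤ X 0) :
    ∀ t : ℝ, 0 ≤ t →
      0 ≤ P t ∧ 0 ≤ S t ∧ 0 ≤ X t ∧ S t ≤ max (S 0) K := by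
  intro T hT
  have hS_cont : Continuous S := continuous_iff_continuousAt.2 fun t => (hS t).continuousAt
  have hX_cont : Continuous X := continuous_iff_continuousAt.2 fun t => (hX t).continuousAt
  have hS_nonneg := season_S_nonneg (T := T) ha hΔ hK hρ hS hS0 hX_cont
  have hPX_nonneg := season_P_X_nonneg hβ hα ha hγ0 hγ1 hω hμ hΔ hP hX hP0 hX0 hS_cont hS_nonneg
  have hS_le := season_S_le ha hΔ hK (fun t => (hρ t).1) hS (fun t ht => (hPX_nonneg t ht).2)
    (le_max_right (S 0) K) (le_max_left (S 0) K)
  have hT_mem : T ∈ Icc 0 T := ⟨hT, le_rfl⟩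
  exact ⟨(hPX_nonneg T hT_mem).1, hS_nonneg T hT_mem, (hPX_nonneg T hT_mem).2, hS_le T hT_mem⟩

/-- For the plant–nematode season model
`P' = -βPS + αa(1-γ)SX/(S+Δ) - ωP`, `S' = ρ(t)S(1-S/K) - aSX/(S+Δ)`,
`X' = βPS + αaγSX/(S+Δ) - μX`, with nonnegative parameters, `Δ, K > 0` and
`0 ≤ ρ(t) ≤ ρ̄`, the nonnegative octant is positively invariant and
`S(t) ≤ max (S 0) K` for all `t ≥ 0`. -/
theorem octant_invariant_and_S_bounded
    (β α a γ ω μ Δ K ρbar : ℝ)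
    (hβ : 0 ≤ β) (hα : 0 ≤ α) (ha : 0 ≤ a) (hγ0 : 0 ≤ γ) (hγ1 : γ ≤ 1)
    (hω : 0 ≤ ω) (hμ : 0 ≤ μ) (hΔ : 0 < Δ) (hK : 0 < K) (hρbar : 0 ≤ ρbar)
    (ρ : ℝ → ℝ) (hρ : ∀ t, 0 ≤ ρ t ∧ ρ t ≤ ρbar)
    (P S X : ℝ → ℝ)
    (hP : ∀ t, HasDerivAt P
      (-β * P t * S t + α * a * (1 - γ) * (S t * X t) / (S t + Δ) - ω * P t) t)
    (hS : ∀ t, HasDerivAt S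
      (ρ t * S t * (1 - S t / K) - a * (S t * X t) / (S t + Δ)) t)
    (hX : ∀ t, HasDerivAt X
      (β * P t * S t + α * a * γ * (S t * X t) / (S t + Δ) - μ * X t) t)
    (hP0 : 0 ≤ P 0) (hS0 : 0 ≤ S 0) (hX0 : 0 ≤ X 0) :
    ∀ t : ℝ, 0 ≤ t →
      0 ≤ P t ∧ 0 ≤ S t ∧ 0 ≤ X t ∧ S t ≤ max (S 0) K :=
  octant_invariant_and_S_bounded_general β α a γ ω μ Δ K ρbar hβ hα ha hγ0 hγ1 hω hμ hΔ hK ρ hρ P S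
    X hP hS hX hP0 hS0 hX0
end
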